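/- arXiv:1709.03686 — 8 statements merged into one kernel-verified Lean document; each statement's English description precedes it below -/
import Mathlib

section
/- The polynomials satisfy the linear relation X_{(12,35,46)} = -X_{(15,24,36)} + X_{(16,23,45)}, where X_{(ab,cd,ef)} = det(v(x_a)×v(x_b), v(x_c)×v(x_d), v(x_e)×v(x_f)) with v(t)=(1,t,t^2). -/
open Matrix

/-- The Veronese vector `v(t) = (1, t, t²)`. -/
def veronese {R : Type*} [CommRing R] (t : R) : Fin 3 → R := ![1, t, t ^ 2]

/-- `X_{(ab,cd,ef)} = det(v(x_a)×v(x_b), v(x_c)×v(x_d), v(x_e)×v(x_f))`. -/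
def Xpoly {R : Type*} [CommRing R] (a b c d e f : R) : R :=
  Matrix.det (Matrix.of ![crossProduct (veronese a) (veronese b),
    crossProduct (veronese c) (veronese d), crossProduct (veronese e) (veronese f)])ᵀ

/-!
Up to the factor `b - a`, the cross product `v(a) × v(b)` is the coefficient vector
`(ab, -(a + b), 1)` of the quadratic `(t - a)(t - b)`. Hence each `X` is a product of three
differences times a determinant of coefficient vectors, and expanding these determinants makes
the relation a polynomial identity.
-/

section

variable {R : Type*} [CommRing R]

def quadCoeffs (a b : R) : Fin 3 → R := ![a * b, -(a + b), 1]

theorem veronese_cross_veronese (a b : R) :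
    crossProduct (veronese a) (veronese b) = (b - a) • quadCoeffs a b := by
  ext i
  fin_cases i <;> simp [veronese, quadCoeffs, crossProduct] <;> ring

theorem Xpoly_eq_mul_det_quadCoeffs (a b c d e f : R) :
    Xpoly a b c d e f = (b - a) * (d - c) * (f - e) *
      det (of ![quadCoeffs a b, quadCoeffs c d, quadCoeffs e f]) := by
  simp only [Xpoly, det_transpose, veronese_cross_veronese, det_fin_three, of_apply, quadCoeffs,
    smul_cons, smul_eq_mul, smul_empty, cons_val', cons_val_zero, cons_val_fin_one, cons_val_one,
    cons_val]
  ring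

theorem det_quadCoeffs (a b c d e f : R) :
    det (of ![quadCoeffs a b, quadCoeffs c d, quadCoeffs e f]) =
      a * b * (e + f - c - d) + c * d * (a + b - e - f) + e * f * (c + d - a - b) := by
  simp only [quadCoeffs, det_fin_three, of_apply, cons_val', cons_val_zero, cons_val_fin_one,
    cons_val_one, cons_val]
  ring

end

/-- The linear relation `X_{(12,35,46)} = -X_{(15,24,36)} + X_{(16,23,45)}`. -/
theorem X_relation_123546 {R : Type*} [CommRing R] (x1 x2 x3 x4 x5 x6 : R) :
    Xpoly x1 x2 x3 x5 x4 x6 = -Xpoly x1 x5 x2 x4 x3 x6 + Xpoly x1 x6 x2 x3 x4 x5 := by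
  simp only [Xpoly_eq_mul_det_quadCoeffs, det_quadCoeffs]
  ring
end

section
/- The polynomials satisfy the linear relation X_{(16,24,35)} = X_{(12,34,56)} - X_{(13,25,46)}, where X_{(ab,cd,ef)} = det(v(x_a)×v(x_b), v(x_c)×v(x_d), v(x_e)×v(x_f)) with v(t)=(1,t,t^2). -/
open Matrix

/-! The line through `v(a)` and `v(b)` on the conic has dual coordinates `(ab, -(a + b), 1)`,
the elementary symmetric functions of `a, b`; pulling the factors `b - a` out of each determinant
turns the relation into a polynomial identity among determinants of these dual vectors. -/

section

variable {R : Type*} [CommRing R]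

theorem crossProduct_veronese (a b : R) :
    veronese a ⨯₃ veronese b = (b - a) • ![a * b, -(a + b), 1] := by
  ext i
  fin_cases i <;>
    simp only [veronese, cross_apply, Fin.zero_eta, Fin.mk_one, Fin.reduceFinMk, cons_val_zero,
      cons_val_one, cons_val, Pi.smul_apply, smul_eq_mul, mul_one, one_mul] <;> ring

theorem Xpoly_eq_mul_det (a b c d e f : R) :
    Xpoly a b c d e f = (b - a) * (d - c) * (f - e) *
      !![a * b, -(a + b), 1; c * d, -(c + d), 1; e * f, -(e + f), 1].det := by
  rw [Xpoly, det_transpose, crossProduct_veronese, crossProduct_veronese, crossProduct_veronese]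
  simp only [smul_cons, smul_eq_mul, mul_one, smul_empty, det_fin_three, of_apply, cons_val',
    cons_val_zero, cons_val_one, cons_val, cons_val_fin_one]
  ring

end

/-- The linear relation `X_{(16,24,35)} = X_{(12,34,56)} - X_{(13,25,46)}`. -/
theorem X_relation_162435 {R : Type*} [CommRing R] (x1 x2 x3 x4 x5 x6 : R) :
    Xpoly x1 x6 x2 x4 x3 x5 = Xpoly x1 x2 x3 x4 x5 x6 - Xpoly x1 x3 x2 x5 x4 x6 := by
  simp only [Xpoly_eq_mul_det, det_fin_three, of_apply, cons_val', cons_val_zero, cons_val_one,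
    cons_val, cons_val_fin_one]
  ring
end

section
/- The polynomials C_{(ab,cd,ef)} satisfy the linear relation C_{(16,24,35)} = C_{(13,25,46)} - C_{(12,34,56)}. -/
/-- `C_{(ab,cd,ef)} = det [[1,1,1],[x_a+x_b, x_c+x_d, x_e+x_f],[x_a x_b, x_c x_d, x_e x_f]]`. -/
def Cpoly {R : Type*} [CommRing R] (a b c d e f : R) : R :=
  Matrix.det !![1, 1, 1; a + b, c + d, e + f; a * b, c * d, e * f]

/-- Subtracting the first column from the other two reduces the determinant to a `2 × 2` one. -/
theorem Cpoly_eq {R : Type*} [CommRing R] (a b c d e f : R) :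
    Cpoly a b c d e f =
      (c + d - (a + b)) * (e * f - a * b) - (e + f - (a + b)) * (c * d - a * b) := by
  rw [Cpoly, Matrix.det_fin_three]
  simp only [Matrix.of_apply, Matrix.cons_val', Matrix.cons_val_zero, Matrix.cons_val_one,
    Matrix.cons_val_two, Matrix.empty_val', Matrix.cons_val_fin_one, Matrix.head_cons,
    Matrix.tail_cons, Matrix.head_fin_const]
  ring

/-- The linear relation `C_{(16,24,35)} = C_{(13,25,46)} - C_{(12,34,56)}`. -/
theorem C_relation_162435 {R : Type*} [CommRing R] (x1 x2 x3 x4 x5 x6 : R) :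
    Cpoly x1 x6 x2 x4 x3 x5 = Cpoly x1 x3 x2 x5 x4 x6 - Cpoly x1 x2 x3 x4 x5 x6 := by
  simp only [Cpoly_eq]
  ring
end

section
/- The polynomials C_{(ab,cd,ef)} satisfy the linear relation C_{(14,25,36)} = C_{(12,34,56)} + C_{(16,23,45)}. -/
theorem Cpoly_eq_alternating_sum_minors {R : Type*} [CommRing R] (a b c d e f : R) :
    Cpoly a b c d e f =
      ((c + d) * (e * f) - (e + f) * (c * d)) - ((a + b) * (e * f) - (e + f) * (a * b)) +
        ((a + b) * (c * d) - (c + d) * (a * b)) := by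
  simp only [Cpoly, Matrix.det_fin_three, Fin.isValue, Matrix.of_apply, Matrix.cons_val',
    Matrix.cons_val_zero, Matrix.cons_val_fin_one, Matrix.cons_val_one, one_mul, Matrix.cons_val]
  ring

/-- The linear relation `C_{(14,25,36)} = C_{(12,34,56)} + C_{(16,23,45)}`. -/
theorem C_relation_142536 {R : Type*} [CommRing R] (x1 x2 x3 x4 x5 x6 : R) :
    Cpoly x1 x4 x2 x5 x3 x6 = Cpoly x1 x2 x3 x4 x5 x6 + Cpoly x1 x6 x2 x3 x4 x5 := by
  simp only [Cpoly_eq_alternating_sum_minors]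
  ring
end

section
/- With Δ_{ijk} = det(v(x_i), v(x_j), v(x_k)) for v(t)=(1,t,t^2), one has Δ_{134}Δ_{256} = (1/2)(X_{12,34,56} + X_{13,25,46} + X_{14,26,35} + X_{15,24,36} + X_{16,23,45}). -/
/-!
Expanding the vector triple product `(c × d) × (e × f)` writes each `X` as a difference of
products of brackets, `X_{ab,cd,ef} = Δ_{abe} Δ_{cdf} - Δ_{abf} Δ_{cde}`. Since every
`Δ_{abc} = (b - a)(c - a)(c - b)` is a Vandermonde determinant, the claim becomes a polynomial
identity in `x₁, …, x₆`.
-/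

open Matrix

/-- The Vandermonde determinant `Δ_{ijk} = det(v(x_i), v(x_j), v(x_k))`. -/
def Dlt {R : Type*} [CommRing R] (a b c : R) : R :=
  Matrix.det (Matrix.of ![veronese a, veronese b, veronese c])ᵀ

section Brackets

variable {R : Type*} [CommRing R]

theorem dotProduct_cross_eq_det (u v w : Fin 3 → R) : w ⬝ᵥ u ⨯₃ v = det ![u, v, w] := by
  rw [← triple_product_eq_det, triple_product_permutation, triple_product_permutation]

theorem det_cross_cross_cross (a b c d e f : Fin 3 → R) :
    det ![a ⨯₃ b, c ⨯₃ d, e ⨯₃ f] =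
      det ![a, b, e] * det ![c, d, f] - det ![a, b, f] * det ![c, d, e] := by
  rw [← triple_product_eq_det, cross_cross_eq_smul_sub_smul', dotProduct_sub, dotProduct_smul,
    dotProduct_smul, dotProduct_comm (a ⨯₃ b) e, dotProduct_comm (a ⨯₃ b) f,
    dotProduct_comm (c ⨯₃ d) f]
  simp only [dotProduct_cross_eq_det, smul_eq_mul]
  ring

theorem Dlt_eq_sub_mul_sub_mul_sub (a b c : R) : Dlt a b c = (b - a) * (c - a) * (c - b) := by
  rw [Dlt, det_transpose, det_fin_three]
  simp [veronese]
  ring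

theorem Xpoly_eq_Dlt_mul_Dlt_sub (a b c d e f : R) :
    Xpoly a b c d e f = Dlt a b e * Dlt c d f - Dlt a b f * Dlt c d e := by
  simp only [Xpoly, Dlt, det_transpose]
  exact det_cross_cross_cross _ _ _ _ _ _

end Brackets

/-- `Δ₁₃₄Δ₂₅₆ = ½(X₁₂,₃₄,₅₆ + X₁₃,₂₅,₄₆ + X₁₄,₂₆,₃₅ + X₁₅,₂₄,₃₆ + X₁₆,₂₃,₄₅)`. -/
theorem Delta134_256 (x1 x2 x3 x4 x5 x6 : ℚ) :
    Dlt x1 x3 x4 * Dlt x2 x5 x6 =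
      (1 / 2) * (Xpoly x1 x2 x3 x4 x5 x6 + Xpoly x1 x3 x2 x5 x4 x6 + Xpoly x1 x4 x2 x6 x3 x5
        + Xpoly x1 x5 x2 x4 x3 x6 + Xpoly x1 x6 x2 x3 x4 x5) := by
  simp only [Xpoly_eq_Dlt_mul_Dlt_sub, Dlt_eq_sub_mul_sub_mul_sub]
  ring
end

section
/- The sum of the seven Parke-Taylor factors PT(1,2,3,4,5,6) + PT(1,2,4,5,6,3) + PT(1,4,2,5,6,3) + PT(1,4,5,6,2,3) + PT(1,4,6,2,3,5) + PT(1,4,6,2,5,3) + PT(1,6,2,3,4,5) equals -(C_{16,24,35})^2 / [(x_1-x_2)(x_1-x_3)(x_2-x_3)(x_1-x_4)(x_3-x_4)(x_1-x_5)(x_2-x_5)(x_4-x_5)(x_2-x_6)(x_3-x_6)(x_4-x_6)(x_5-x_6)], as rational functions in x_1,…,x_6. -/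
/-- The field of rational functions in six variables over ℚ. -/
abbrev RF := FractionRing (MvPolynomial (Fin 6) ℚ)

/-- The variable `xᵢ` as a rational function. -/
noncomputable def xv (i : Fin 6) : RF :=
  algebraMap (MvPolynomial (Fin 6) ℚ) RF (MvPolynomial.X i)

/-- The Parke–Taylor factor of the cyclic word `(σ₁,…,σ₆)`. -/
noncomputable def PT (a b c d e f : Fin 6) : RF :=
  1 / ((xv a - xv b) * (xv b - xv c) * (xv c - xv d) * (xv d - xv e) * (xv e - xv f) *
    (xv f - xv a))

/-- The numerator polynomial `C₁₆,₂₄,₃₅`, as a rational function. -/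
noncomputable def C162435 : RF :=
  xv 0 * xv 1 * xv 3 - xv 1 * xv 2 * xv 3 - xv 0 * xv 2 * xv 4 + xv 1 * xv 2 * xv 4
    - xv 1 * xv 3 * xv 4 + xv 2 * xv 3 * xv 4 - xv 0 * xv 1 * xv 5 + xv 0 * xv 2 * xv 5
    - xv 0 * xv 3 * xv 5 + xv 1 * xv 3 * xv 5 + xv 0 * xv 4 * xv 5 - xv 2 * xv 4 * xv 5

/-! Orient every difference as `xᵢ - xⱼ` with `i < j`. Then each Parke–Taylor denominator divides
the Vandermonde product `∏_{i<j} (xᵢ - xⱼ)`, which is the right-hand denominator times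
`(x₁ - x₆)(x₂ - x₄)(x₃ - x₅)`. Over this common denominator the claim becomes a polynomial identity
of degree nine: the seven signed products of the nine differences missing from each cycle add up to
`-C² (x₁ - x₆)(x₂ - x₄)(x₃ - x₅)`. -/

open Function

section Field

variable {F : Type*} [Field F]

def parkeTaylor (x : Fin 6 → F) (a b c d e f : Fin 6) : F :=
  1 / ((x a - x b) * (x b - x c) * (x c - x d) * (x d - x e) * (x e - x f) * (x f - x a))

def c162435 (x : Fin 6 → F) : F :=
  x 0 * x 1 * x 3 - x 1 * x 2 * x 3 - x 0 * x 2 * x 4 + x 1 * x 2 * x 4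
    - x 1 * x 3 * x 4 + x 2 * x 3 * x 4 - x 0 * x 1 * x 5 + x 0 * x 2 * x 5
    - x 0 * x 3 * x 5 + x 1 * x 3 * x 5 + x 0 * x 4 * x 5 - x 2 * x 4 * x 5

theorem seven_parkeTaylor_sum {x : Fin 6 → F} (hx : Injective x) :
    parkeTaylor x 0 1 2 3 4 5 + parkeTaylor x 0 1 3 4 5 2 + parkeTaylor x 0 3 1 4 5 2
      + parkeTaylor x 0 3 4 5 1 2 + parkeTaylor x 0 3 5 1 2 4 + parkeTaylor x 0 3 5 1 4 2
      + parkeTaylor x 0 5 1 2 3 4 =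
    -(c162435 x ^ 2) /
      ((x 0 - x 1) * (x 0 - x 2) * (x 1 - x 2) * (x 0 - x 3) * (x 2 - x 3) *
        (x 0 - x 4) * (x 1 - x 4) * (x 3 - x 4) * (x 1 - x 5) * (x 2 - x 5) *
        (x 3 - x 5) * (x 4 - x 5)) := by
  unfold parkeTaylor c162435
  -- Once `xᵢ - xⱼ` and `xⱼ - xᵢ` are the same atom up to sign, `field_simp` finds the Vandermonde
  -- common denominator instead of multiplying all seven denominators together.
  rw [show x 5 - x 0 = -(x 0 - x 5) by ring, show x 5 - x 1 = -(x 1 - x 5) by ring,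
    show x 5 - x 2 = -(x 2 - x 5) by ring, show x 4 - x 0 = -(x 0 - x 4) by ring,
    show x 4 - x 2 = -(x 2 - x 4) by ring, show x 3 - x 1 = -(x 1 - x 3) by ring,
    show x 2 - x 0 = -(x 0 - x 2) by ring]
  field_simp [sub_ne_zero, hx.ne_iff]
  ring

end Field

theorem xv_injective : Injective xv :=
  (IsFractionRing.injective (MvPolynomial (Fin 6) ℚ) RF).comp MvPolynomial.X_injective

/-- The sum of the seven Parke–Taylor factors collapses to
`-(C₁₆,₂₄,₃₅)² / ∏ (xᵢ-xⱼ)`. -/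
theorem seven_PT_sum :
    PT 0 1 2 3 4 5 + PT 0 1 3 4 5 2 + PT 0 3 1 4 5 2 + PT 0 3 4 5 1 2
      + PT 0 3 5 1 2 4 + PT 0 3 5 1 4 2 + PT 0 5 1 2 3 4 =
    -(C162435 ^ 2) /
      ((xv 0 - xv 1) * (xv 0 - xv 2) * (xv 1 - xv 2) * (xv 0 - xv 3) * (xv 2 - xv 3) *
        (xv 0 - xv 4) * (xv 1 - xv 4) * (xv 3 - xv 4) * (xv 1 - xv 5) * (xv 2 - xv 5) *
        (xv 3 - xv 5) * (xv 4 - xv 5)) :=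
  seven_parkeTaylor_sum xv_injective
end

section
/- Under the cyclic shift of variables x_i ↦ x_{i+1} (indices mod 6), the polynomial C_{12,34,56} is sent to ±C_{16,23,45}, C_{16,23,45} to ±C_{12,34,56}, and the set {C_{14,26,35}, C_{15,24,36}, C_{13,25,46}} is permuted up to sign; i.e., the cyclic group ⟨(123456)⟩ acting on indices preserves, up to sign, the partition of the basis into the orbits {C_{12,34,56}, C_{16,23,45}} and {C_{14,26,35}, C_{15,24,36}, C_{13,25,46}}. -/
/-!
The shift sends `C_{(ab,cd,ef)}` to `C_{(a+1 b+1, c+1 d+1, e+1 f+1)}`, and `C` depends on the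
pairing only up to sign: its columns are symmetric functions of each pair, and swapping two pairs
swaps two columns of the determinant. So it suffices to see how the shift permutes the pairings.
-/

open MvPolynomial

/-- `C_{(ab,cd,ef)}` as a polynomial in `ℚ[x₁,…,x₆]`, given the six indices. -/
noncomputable def Cp (a b c d e f : Fin 6) : MvPolynomial (Fin 6) ℚ :=
  Matrix.det !![1, 1, 1; X a + X b, X c + X d, X e + X f; X a * X b, X c * X d, X e * X f]

/-- The cyclic shift `xᵢ ↦ xᵢ₊₁` (indices mod 6). -/
noncomputable def cyc : MvPolynomial (Fin 6) ℚ →ₐ[ℚ] MvPolynomial (Fin 6) ℚ :=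
  rename (finRotate 6)

section Symmetries

variable (a b c d e f : Fin 6)

theorem Cp_eq : Cp a b c d e f =
    (X c + X d) * (X e * X f) - (X e + X f) * (X c * X d)
      - ((X a + X b) * (X e * X f) - (X e + X f) * (X a * X b))
      + ((X a + X b) * (X c * X d) - (X c + X d) * (X a * X b)) := by
  simp only [Cp, Matrix.det_fin_three, Matrix.of_apply, Matrix.cons_val', Matrix.cons_val_zero,
    Matrix.cons_val_fin_one, Matrix.cons_val_one, Matrix.cons_val]
  ring

theorem Cp_swap_first_pair : Cp b a c d e f = Cp a b c d e f := by
  simp only [Cp_eq]; ring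

theorem Cp_swap_second_pair : Cp a b d c e f = Cp a b c d e f := by
  simp only [Cp_eq]; ring

theorem Cp_swap_first_pairs : Cp c d a b e f = -Cp a b c d e f := by
  simp only [Cp_eq]; ring

theorem Cp_rotate_pairs : Cp e f a b c d = Cp a b c d e f := by
  simp only [Cp_eq]; ring

theorem cyc_Cp :
    cyc (Cp a b c d e f) = Cp (a + 1) (b + 1) (c + 1) (d + 1) (e + 1) (f + 1) := by
  simp [Cp_eq, cyc, finRotate_apply]

end Symmetries

theorem cyc_Cp_012345 : cyc (Cp 0 1 2 3 4 5) = Cp 0 5 1 2 3 4 :=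
  (cyc_Cp ..).trans <| (Cp_rotate_pairs 1 2 3 4 5 0).symm.trans (Cp_swap_first_pair 0 5 ..)

theorem cyc_Cp_051234 : cyc (Cp 0 5 1 2 3 4) = Cp 0 1 2 3 4 5 :=
  (cyc_Cp ..).trans (Cp_swap_first_pair ..)

theorem cyc_Cp_031524 : cyc (Cp 0 3 1 5 2 4) = -Cp 0 2 1 4 3 5 :=
  (cyc_Cp ..).trans <| (Cp_swap_second_pair 1 4 0 2 3 5).trans (Cp_swap_first_pairs ..)

theorem cyc_Cp_041325 : cyc (Cp 0 4 1 3 2 5) = Cp 0 3 1 5 2 4 :=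
  (cyc_Cp ..).trans <| (Cp_rotate_pairs 1 5 2 4 3 0).symm.trans (Cp_swap_first_pair 0 3 ..)

theorem cyc_Cp_021435 : cyc (Cp 0 2 1 4 3 5) = Cp 0 4 1 3 2 5 :=
  (cyc_Cp ..).trans <| (Cp_rotate_pairs 1 3 2 5 4 0).symm.trans (Cp_swap_first_pair 0 4 ..)

/-- Under the cyclic shift `(123456)`, `C₁₂,₃₄,₅₆ ↦ ±C₁₆,₂₃,₄₅`, `C₁₆,₂₃,₄₅ ↦ ±C₁₂,₃₄,₅₆`, and
the set `{C₁₄,₂₆,₃₅, C₁₅,₂₄,₃₆, C₁₃,₂₅,₄₆}` is permuted up to sign. -/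
theorem cyclic_orbits :
    (cyc (Cp 0 1 2 3 4 5) = Cp 0 5 1 2 3 4 ∨ cyc (Cp 0 1 2 3 4 5) = -Cp 0 5 1 2 3 4) ∧
    (cyc (Cp 0 5 1 2 3 4) = Cp 0 1 2 3 4 5 ∨ cyc (Cp 0 5 1 2 3 4) = -Cp 0 1 2 3 4 5) ∧
    (∀ p ∈ ({Cp 0 3 1 5 2 4, Cp 0 4 1 3 2 5, Cp 0 2 1 4 3 5} : Set (MvPolynomial (Fin 6) ℚ)),
      ∃ q ∈ ({Cp 0 3 1 5 2 4, Cp 0 4 1 3 2 5, Cp 0 2 1 4 3 5} : Set (MvPolynomial (Fin 6) ℚ)),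
        cyc p = q ∨ cyc p = -q) := by
  refine ⟨.inl cyc_Cp_012345, .inl cyc_Cp_051234, ?_⟩
  rintro p (rfl | rfl | rfl)
  · exact ⟨Cp 0 2 1 4 3 5, by simp, .inr cyc_Cp_031524⟩
  · exact ⟨Cp 0 3 1 5 2 4, by simp, .inl cyc_Cp_041325⟩
  · exact ⟨Cp 0 4 1 3 2 5, by simp, .inl cyc_Cp_021435⟩
end

section
/- The five polynomials C_{12,34,56}, C_{16,23,45}, C_{14,26,35}, C_{15,24,36}, C_{13,25,46} are linearly independent over ℚ in the polynomial ring ℚ[x_1,…,x_6]. -/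
open MvPolynomial

theorem MvPolynomial.linearIndependent_of_det_eval_ne_zero {ι σ R : Type*} [Fintype ι]
    [DecidableEq ι] [CommRing R] [IsDomain R] {f : ι → MvPolynomial σ R} (p : ι → σ → R)
    {M : Matrix ι ι R} (hM : ∀ i j, eval (p j) (f i) = M i j) (hdet : M.det ≠ 0) :
    LinearIndependent R f := by
  have hcomp : (LinearMap.pi fun j => (aeval (p j)).toLinearMap) ∘ f = fun i => M i := by
    ext i j
    exact hM i j
  exact .of_comp _ (hcomp ▸ Matrix.linearIndependent_rows_of_det_ne_zero hdet)

/-- The five polynomials `C₁₂,₃₄,₅₆, C₁₆,₂₃,₄₅, C₁₄,₂₆,₃₅, C₁₅,₂₄,₃₆, C₁₃,₂₅,₄₆` are linearly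
independent over ℚ. -/
theorem C_linearIndependent :
    LinearIndependent ℚ
      ![Cp 0 1 2 3 4 5, Cp 0 5 1 2 3 4, Cp 0 3 1 5 2 4, Cp 0 4 1 3 2 5, Cp 0 2 1 4 3 5] := by
  refine linearIndependent_of_det_eval_ne_zero
    ![![0, 1, 2, 0, 1, 2], ![0, 1, 0, 1, 2, 2], ![0, 1, 2, 2, 1, 0], ![0, 1, 1, 0, 2, 2],
      ![0, 0, 0, 1, 1, 1]]
    (M := !![2, 0, 0, 0, 1; 2, -2, 0, 0, -1; 0, -2, -2, 0, 0; 0, 0, -2, -2, 0; 0, 0, 0, -2, 1])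
    ?_ ?_
  · intro i j
    fin_cases i <;> fin_cases j <;> simp [Cp, Matrix.det_fin_three] <;> norm_num
  · simp [Matrix.det_succ_row_zero, Fin.sum_univ_succ, Fin.succAbove]
    norm_num
end
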